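/- arXiv:1702.00376 — 4 statements merged into one kernel-verified Lean document; each statement's English description precedes it below -/
import Mathlib

section
/- Let F₁ and F₂ be cumulative distribution functions of ℤ≥0-valued random variables (with the convention F(−1)=0). Define p**(i,j) = max(min(F₁(i), F₂(j)) − max(F₁(i−1), F₂(j−1)), 0) for i,j ∈ ℤ≥0. Then p** is a probability mass function on ℤ≥0 × ℤ≥0 whose first marginal has CDF F₁ and whose second marginal has CDF F₂. -/
open Filter

/-- `F(i−1)` with the convention `F(−1) = 0`. -/
noncomputable def cdfPrev (F : ℕ → ℝ) (i : ℕ) : ℝ := if i = 0 then 0 else F (i - 1)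

/-- `F` is the CDF of a ℤ≥0-valued random variable. -/
def IsCDF (F : ℕ → ℝ) : Prop :=
  Monotone F ∧ 0 ≤ F 0 ∧ Tendsto F atTop (nhds 1)

/-- The comonotone (Fréchet–Hoeffding upper) coupling in pmf form. -/
noncomputable def comonCoupling (F₁ F₂ : ℕ → ℝ) (i j : ℕ) : ℝ :=
  max (min (F₁ i) (F₂ j) - max (cdfPrev F₁ i) (cdfPrev F₂ j)) 0

lemma cdfPrev_succ (F : ℕ → ℝ) (n : ℕ) : cdfPrev F (n + 1) = F n := by
  simp [cdfPrev]

lemma cdfPrev_le (F : ℕ → ℝ) (h : IsCDF F) (i : ℕ) : cdfPrev F i ≤ F i := by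
  cases i with
  | zero => simpa [cdfPrev] using h.2.1
  | succ n => simpa [cdfPrev_succ] using h.1 (Nat.le_succ n)

lemma cdfPrev_nonneg (F : ℕ → ℝ) (h : IsCDF F) (i : ℕ) : 0 ≤ cdfPrev F i := by
  cases i with
  | zero => simp [cdfPrev]
  | succ n => simpa [cdfPrev_succ] using h.2.1.trans (h.1 (Nat.zero_le n))

lemma isCDF_le_one (F : ℕ → ℝ) (h : IsCDF F) (i : ℕ) : F i ≤ 1 :=
  h.1.ge_of_tendsto h.2.2 i

lemma cdfPrev_tendsto (F : ℕ → ℝ) (h : IsCDF F) :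
    Tendsto (cdfPrev F) atTop (nhds 1) := by
  have : Tendsto (fun n => cdfPrev F (n + 1)) atTop (nhds 1) := by
    simpa [cdfPrev_succ] using h.2.2
  exact (tendsto_add_atTop_iff_nat 1).mp this

lemma key (a b x y : ℝ) (hab : a ≤ b) (hxy : x ≤ y) :
    max (min b y - max a x) 0 = max (min y b) a - max (min x b) a := by
  rcases le_total y b with h1 | h1 <;> rcases le_total x b with h2 | h2 <;>
    rcases le_total y a with h3 | h3 <;> rcases le_total x a with h4 | h4 <;>
    simp_all [min_def, max_def] <;> linarith

lemma comonCoupling_swap (F₁ F₂ : ℕ → ℝ) (i j : ℕ) :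
    comonCoupling F₁ F₂ i j = comonCoupling F₂ F₁ j i := by
  simp [comonCoupling, min_comm, max_comm]

lemma marginal_hasSum (F₁ F₂ : ℕ → ℝ) (h₁ : IsCDF F₁) (h₂ : IsCDF F₂) (i : ℕ) :
    HasSum (fun j => comonCoupling F₁ F₂ i j) (F₁ i - cdfPrev F₁ i) := by
  set a := cdfPrev F₁ i with ha
  set b := F₁ i with hb
  have hab : a ≤ b := cdfPrev_le F₁ h₁ i
  set c : ℝ → ℝ := fun x => max (min x b) a with hc
  have hterm : ∀ j, comonCoupling F₁ F₂ i j = c (cdfPrev F₂ (j + 1)) - c (cdfPrev F₂ j) := by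
    intro j
    simp only [cdfPrev_succ, hc]
    show max (min b (F₂ j) - max a (cdfPrev F₂ j)) 0
      = max (min (F₂ j) b) a - max (min (cdfPrev F₂ j) b) a
    exact key a b (cdfPrev F₂ j) (F₂ j) hab (cdfPrev_le F₂ h₂ j)
  have hsum : ∀ N, ∑ j ∈ Finset.range N, comonCoupling F₁ F₂ i j = c (cdfPrev F₂ N) - c 0 := by
    intro N
    have : cdfPrev F₂ 0 = 0 := by simp [cdfPrev]
    rw [← this]
    simp only [hterm]
    exact Finset.sum_range_sub (fun n => c (cdfPrev F₂ n)) N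
  have hc0 : c 0 = a := by
    have h0b : (0:ℝ) ≤ b := (cdfPrev_nonneg F₁ h₁ i).trans hab
    have h0a : (0:ℝ) ≤ a := cdfPrev_nonneg F₁ h₁ i
    simp [hc, min_eq_left h0b, max_eq_right h0a]
  have hc1 : c 1 = b := by
    have : b ≤ 1 := isCDF_le_one F₁ h₁ i
    simp [hc, min_eq_right this, max_eq_left hab]
  have hcont : Continuous c := (continuous_id.min continuous_const).max continuous_const
  have htend : Tendsto (fun N => ∑ j ∈ Finset.range N, comonCoupling F₁ F₂ i j) atTop
      (nhds (b - a)) := by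
    simp only [hsum, hc0]
    have := (hcont.tendsto 1).comp (cdfPrev_tendsto F₂ h₂)
    rw [hc1] at this
    exact this.sub_const a
  have hnn : ∀ j, 0 ≤ comonCoupling F₁ F₂ i j := fun j => le_max_right _ _
  have hsummable : Summable fun j => comonCoupling F₁ F₂ i j := by
    apply summable_of_sum_range_le (c := b - a) hnn
    intro N
    rw [hsum, hc0]
    have : c (cdfPrev F₂ N) ≤ b := max_le (min_le_right _ _) hab
    linarith
  have := hsummable.hasSum
  rwa [tendsto_nhds_unique (hsummable.hasSum.tendsto_sum_nat) htend] at this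

lemma total_hasSum (F : ℕ → ℝ) (h : IsCDF F) :
    HasSum (fun i => F i - cdfPrev F i) 1 := by
  have hsum : ∀ N, ∑ i ∈ Finset.range N, (F i - cdfPrev F i) = cdfPrev F N := by
    intro N
    have h0 : cdfPrev F 0 = 0 := by simp [cdfPrev]
    have h := Finset.sum_range_sub (fun n => cdfPrev F n) N
    simp only [cdfPrev_succ, h0, sub_zero] at h
    exact h
  have hnn : ∀ i, 0 ≤ F i - cdfPrev F i := fun i => sub_nonneg.mpr (cdfPrev_le F h i)
  have htend : Tendsto (fun N => ∑ i ∈ Finset.range N, (F i - cdfPrev F i)) atTop (nhds 1) := by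
    simp only [hsum]; exact cdfPrev_tendsto F h
  have hsummable : Summable fun i => F i - cdfPrev F i := by
    apply summable_of_sum_range_le (c := 1) hnn
    intro N
    rw [hsum]
    calc cdfPrev F N ≤ F N := cdfPrev_le F h N
    _ ≤ 1 := isCDF_le_one F h N
  have := hsummable.hasSum
  rwa [tendsto_nhds_unique (hsummable.hasSum.tendsto_sum_nat) htend] at this

/-- The comonotone coupling is a probability mass function on ℤ≥0 × ℤ≥0 with the
prescribed marginal CDFs. -/
theorem comonCoupling_isPMF_with_marginals
    (F₁ F₂ : ℕ → ℝ) (h₁ : IsCDF F₁) (h₂ : IsCDF F₂) :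
    (∀ i j, 0 ≤ comonCoupling F₁ F₂ i j) ∧
    (∑' ij : ℕ × ℕ, comonCoupling F₁ F₂ ij.1 ij.2 = 1) ∧
    (∀ i, ∑' j, comonCoupling F₁ F₂ i j = F₁ i - cdfPrev F₁ i) ∧
    (∀ j, ∑' i, comonCoupling F₁ F₂ i j = F₂ j - cdfPrev F₂ j) := by
  have hnn : ∀ i j, 0 ≤ comonCoupling F₁ F₂ i j := fun i j => le_max_right _ _
  have hm1 : ∀ i, ∑' j, comonCoupling F₁ F₂ i j = F₁ i - cdfPrev F₁ i :=
    fun i => (marginal_hasSum F₁ F₂ h₁ h₂ i).tsum_eq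
  have hm2 : ∀ j, ∑' i, comonCoupling F₁ F₂ i j = F₂ j - cdfPrev F₂ j := by
    intro j
    have := (marginal_hasSum F₂ F₁ h₂ h₁ j).tsum_eq
    simp only [comonCoupling_swap F₁ F₂]
    exact this
  refine ⟨hnn, ?_, hm1, hm2⟩
  have hrow : ∀ i, Summable fun j => comonCoupling F₁ F₂ i j :=
    fun i => (marginal_hasSum F₁ F₂ h₁ h₂ i).summable
  have hsums : Summable fun i => ∑' j, comonCoupling F₁ F₂ i j := by
    simp only [hm1]
    exact (total_hasSum F₁ h₁).summable
  have hsummable : Summable fun ij : ℕ × ℕ => comonCoupling F₁ F₂ ij.1 ij.2 :=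
    (summable_prod_of_nonneg (fun p => hnn p.1 p.2)).mpr ⟨hrow, hsums⟩
  rw [Summable.tsum_prod hsummable]
  simp only [hm1]
  exact (total_hasSum F₁ h₁).tsum_eq
end

section
/- The support of the antimonotone coupling p*(i,j) = [min(F₁(i), 1−F₂(j−1)) − max(F₁(i−1), 1−F₂(j))]⁺ is an antimonotone set: for any two points s, s' in the support, s − s' lies in {(x,y) ∈ ℝ² : xy ≤ 0}. -/
open Filter

noncomputable def survPrev (F : ℕ → ℝ) (j : ℕ) : ℝ := if j = 0 then 1 else 1 - F (j - 1)

noncomputable def antiCoupling (F₁ F₂ : ℕ → ℝ) (i j : ℕ) : ℝ :=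
  max (min (F₁ i) (survPrev F₂ j) - max (cdfPrev F₁ i) (1 - F₂ j)) 0

lemma antiCoupling_key (F₁ F₂ : ℕ → ℝ) (h₁ : Monotone F₁) (h₂ : Monotone F₂)
    (i j i' j' : ℕ) (hi : i < i') (hj : j < j')
    (hs : 0 < antiCoupling F₁ F₂ i j) (hs' : 0 < antiCoupling F₁ F₂ i' j') : False := by
  unfold antiCoupling at hs hs'
  have h1 : 1 - F₂ j < F₁ i := by
    rcases lt_or_ge (min (F₁ i) (survPrev F₂ j) - max (cdfPrev F₁ i) (1 - F₂ j)) 0 with h | h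
    · simp [max_eq_right h.le] at hs
    · rw [max_eq_left h] at hs
      have hmin : min (F₁ i) (survPrev F₂ j) ≤ F₁ i := min_le_left _ _
      have hmax : 1 - F₂ j ≤ max (cdfPrev F₁ i) (1 - F₂ j) := le_max_right _ _
      linarith
  have h2 : cdfPrev F₁ i' < survPrev F₂ j' := by
    rcases lt_or_ge (min (F₁ i') (survPrev F₂ j') - max (cdfPrev F₁ i') (1 - F₂ j')) 0 with h | h
    · simp [max_eq_right h.le] at hs'
    · rw [max_eq_left h] at hs'
      have hmin : min (F₁ i') (survPrev F₂ j') ≤ survPrev F₂ j' := min_le_right _ _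
      have hmax : cdfPrev F₁ i' ≤ max (cdfPrev F₁ i') (1 - F₂ j') := le_max_left _ _
      linarith
  have hi0 : i' ≠ 0 := (Nat.zero_lt_of_lt hi).ne'
  have hj0 : j' ≠ 0 := (Nat.zero_lt_of_lt hj).ne'
  rw [cdfPrev, survPrev, if_neg hi0, if_neg hj0] at h2
  have h3 : F₁ i ≤ F₁ (i' - 1) := h₁ (Nat.le_sub_one_of_lt hi)
  have h4 : F₂ j ≤ F₂ (j' - 1) := h₂ (Nat.le_sub_one_of_lt hj)
  linarith

/-- The support of the antimonotone coupling is an antimonotone set: the difference of any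
two support points lies in `{(x,y) : x·y ≤ 0}`. -/
theorem antiCoupling_support_antimonotone
    (F₁ F₂ : ℕ → ℝ) (h₁ : IsCDF F₁) (h₂ : IsCDF F₂)
    (i j i' j' : ℕ)
    (hs : 0 < antiCoupling F₁ F₂ i j) (hs' : 0 < antiCoupling F₁ F₂ i' j') :
    ((i : ℝ) - (i' : ℝ)) * ((j : ℝ) - (j' : ℝ)) ≤ 0 := by
  by_contra h
  push_neg at h
  rcases mul_pos_iff.mp h with ⟨ha, hb⟩ | ⟨ha, hb⟩
  · have hi : i' < i := by exact_mod_cast (by linarith : (i' : ℝ) < i)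
    have hj : j' < j := by exact_mod_cast (by linarith : (j' : ℝ) < j)
    exact antiCoupling_key F₁ F₂ h₁.1 h₂.1 i' j' i j hi hj hs' hs
  · have hi : i < i' := by exact_mod_cast (by linarith : (i : ℝ) < i')
    have hj : j < j' := by exact_mod_cast (by linarith : (j : ℝ) < j')
    exact antiCoupling_key F₁ F₂ h₁.1 h₂.1 i j i' j' hi hj hs hs'
end

section
/- Let F₁,…,F_J be CDFs of ℤ≥0-valued random variables and e ∈ {0,1}^J a monotonicity vector with e₁ = 0. Define F̃_j(i; 0) = F_j(i) and F̃_j(i; 1) = 1 − F_j(i), with conventions F_j(−1) = 0. Then the function p^e(i₁,…,i_J) = [ min_j F̃_j(i_j − e_j; e_j) − max_j F̃_j(i_j + e_j − 1; e_j) ]⁺ is a probability mass function on ℤ≥0^J whose j-th marginal has CDF F_j for every j. -/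
open Filter

/-- Extension of a CDF `F : ℕ → ℝ` to `ℤ` with `F(i) = 0` for `i < 0`. -/
noncomputable def cdfExt (F : ℕ → ℝ) (i : ℤ) : ℝ := if i < 0 then 0 else F i.toNat

/-- `F̃(i; e)`: the CDF if `e = false`, the survival function `1 − F(i)` if `e = true`,
with the convention `F(−1) = 0`. -/
noncomputable def Ftil (F : ℕ → ℝ) (e : Bool) (i : ℤ) : ℝ :=
  if e then 1 - cdfExt F i else cdfExt F i

/-- The extreme joint pmf with monotonicity structure `e`:
`p^e(i) = [min_j F̃_j(i_j − e_j; e_j) − max_j F̃_j(i_j + e_j − 1; e_j)]⁺`. -/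
noncomputable def extremePMF {J : ℕ} (hJ : 0 < J) (F : Fin J → ℕ → ℝ) (e : Fin J → Bool)
    (i : Fin J → ℕ) : ℝ :=
  max ((Finset.univ.inf' (Finset.univ_nonempty_iff.mpr ⟨⟨0, hJ⟩⟩)
        (fun j => Ftil (F j) (e j) ((i j : ℤ) - (if e j then 1 else 0)))) -
      (Finset.univ.sup' (Finset.univ_nonempty_iff.mpr ⟨⟨0, hJ⟩⟩)
        (fun j => Ftil (F j) (e j) ((i j : ℤ) + (if e j then 1 else 0) - 1)))) 0

namespace ExtremeAux

variable {F : ℕ → ℝ}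

lemma cdfExt_natCast (F : ℕ → ℝ) (k : ℕ) : cdfExt F (k : ℤ) = F k := by
  simp [cdfExt]

lemma cdfExt_neg_one (F : ℕ → ℝ) : cdfExt F (-1) = 0 := by
  norm_num [cdfExt]

lemma cdfExt_sub_one (F : ℕ → ℝ) {k : ℕ} (hk : 0 < k) :
    cdfExt F ((k : ℤ) - 1) = F (k - 1) := by
  have h : ((k : ℤ) - 1) = ((k - 1 : ℕ) : ℤ) := by omega
  rw [h, cdfExt_natCast]

lemma cdfExt_nonneg (hm : Monotone F) (h0 : 0 ≤ F 0) (i : ℤ) : 0 ≤ cdfExt F i := by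
  unfold cdfExt
  split
  · exact le_refl 0
  · exact h0.trans (hm (Nat.zero_le _))

lemma cdfExt_le_one (hm : Monotone F) (hlim : Tendsto F atTop (nhds 1)) (i : ℤ) :
    cdfExt F i ≤ 1 := by
  unfold cdfExt
  split
  · norm_num
  · exact hm.ge_of_tendsto hlim _

lemma cdfExt_mono (hm : Monotone F) (h0 : 0 ≤ F 0) : Monotone (cdfExt F) := by
  intro a b hab
  unfold cdfExt
  split_ifs with ha hb
  · exact le_refl 0
  · exact h0.trans (hm (Nat.zero_le _))
  · omega
  · exact hm (Int.toNat_le_toNat hab)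

noncomputable def Afun (F : ℕ → ℝ) (e : Bool) (k : ℕ) : ℝ :=
  Ftil F e ((k : ℤ) - (if e then 1 else 0))

noncomputable def Bfun (F : ℕ → ℝ) (e : Bool) (k : ℕ) : ℝ :=
  Ftil F e ((k : ℤ) + (if e then 1 else 0) - 1)

lemma Afun_false (F : ℕ → ℝ) (k : ℕ) : Afun F false k = F k := by
  simp [Afun, Ftil, cdfExt_natCast]

lemma Afun_true (F : ℕ → ℝ) (k : ℕ) : Afun F true k = 1 - cdfExt F ((k : ℤ) - 1) := by
  simp [Afun, Ftil]

lemma Bfun_false (F : ℕ → ℝ) (k : ℕ) : Bfun F false k = cdfExt F ((k : ℤ) - 1) := by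
  simp [Bfun, Ftil]

lemma Bfun_true (F : ℕ → ℝ) (k : ℕ) : Bfun F true k = 1 - F k := by
  have h : ((k : ℤ) + 1 - 1) = (k : ℤ) := by ring
  simp [Bfun, Ftil, h, cdfExt_natCast]

lemma cdfExt_pred_le (hm : Monotone F) (h0 : 0 ≤ F 0) (k : ℕ) :
    cdfExt F ((k : ℤ) - 1) ≤ F k := by
  rw [← cdfExt_natCast F k]
  exact cdfExt_mono hm h0 (by linarith)

lemma Bfun_le_Afun (hm : Monotone F) (h0 : 0 ≤ F 0) (e : Bool) (k : ℕ) :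
    Bfun F e k ≤ Afun F e k := by
  cases e
  · rw [Bfun_false, Afun_false]; exact cdfExt_pred_le hm h0 k
  · rw [Bfun_true, Afun_true]
    linarith [cdfExt_pred_le hm h0 k]

lemma Bfun_nonneg (hm : Monotone F) (h0 : 0 ≤ F 0) (hlim : Tendsto F atTop (nhds 1))
    (e : Bool) (k : ℕ) : 0 ≤ Bfun F e k := by
  cases e
  · rw [Bfun_false]; exact cdfExt_nonneg hm h0 _
  · rw [Bfun_true]
    linarith [hm.ge_of_tendsto hlim k]

lemma Afun_le_one (hm : Monotone F) (h0 : 0 ≤ F 0) (hlim : Tendsto F atTop (nhds 1))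
    (e : Bool) (k : ℕ) : Afun F e k ≤ 1 := by
  cases e
  · rw [Afun_false]; exact hm.ge_of_tendsto hlim k
  · rw [Afun_true]
    linarith [cdfExt_nonneg hm h0 ((k : ℤ) - 1)]

lemma Afun_sub_Bfun (F : ℕ → ℝ) (e : Bool) (k : ℕ) :
    Afun F e k - Bfun F e k = F k - cdfExt F ((k : ℤ) - 1) := by
  cases e
  · rw [Afun_false, Bfun_false]
  · rw [Afun_true, Bfun_true]; ring

lemma existsUnique_mem (hm : Monotone F) (h0 : 0 ≤ F 0) (hlim : Tendsto F atTop (nhds 1))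
    (e : Bool) {u : ℝ} (hu : u ∈ Set.Ioo (0 : ℝ) 1) :
    ∃! k : ℕ, u ∈ Set.Ico (Bfun F e k) (Afun F e k) := by
  obtain ⟨hu0, hu1⟩ := hu
  cases e
  case false =>
    have hex : ∃ n, u < F n := (hlim.eventually (eventually_gt_nhds hu1)).exists
    refine ⟨Nat.find hex, ⟨?_, ?_⟩, ?_⟩
    · rw [Bfun_false]
      rcases Nat.eq_zero_or_pos (Nat.find hex) with h | h
      · rw [h]; simpa [cdfExt_neg_one] using hu0.le
      · rw [cdfExt_sub_one F h]
        have := Nat.find_min hex (Nat.sub_lt h one_pos)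
        linarith [not_lt.mp this]
    · rw [Afun_false]; exact Nat.find_spec hex
    · rintro m ⟨hB, hA⟩
      rw [Bfun_false] at hB
      rw [Afun_false] at hA
      have h1 : Nat.find hex ≤ m := Nat.find_min' hex hA
      rcases h1.lt_or_eq with h2 | h2
      · exfalso
        have hm1 : 0 < m := by omega
        rw [cdfExt_sub_one F hm1] at hB
        have : F (Nat.find hex) ≤ F (m - 1) := hm (by omega)
        linarith [Nat.find_spec hex]
      · exact h2.symm
  case true =>
    have hex : ∃ n, 1 - u ≤ F n := by
      obtain ⟨n, hn⟩ := (hlim.eventually (eventually_gt_nhds (by linarith : 1 - u < 1))).exists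
      exact ⟨n, hn.le⟩
    refine ⟨Nat.find hex, ⟨?_, ?_⟩, ?_⟩
    · rw [Bfun_true]
      linarith [Nat.find_spec hex]
    · rw [Afun_true]
      rcases Nat.eq_zero_or_pos (Nat.find hex) with h | h
      · rw [h]; simpa [cdfExt_neg_one] using hu1
      · rw [cdfExt_sub_one F h]
        have := Nat.find_min hex (Nat.sub_lt h one_pos)
        linarith [not_le.mp this]
    · rintro m ⟨hB, hA⟩
      rw [Bfun_true] at hB
      rw [Afun_true] at hA
      have h1 : Nat.find hex ≤ m := Nat.find_min' hex (by linarith)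
      rcases h1.lt_or_eq with h2 | h2
      · exfalso
        have hm1 : 0 < m := by omega
        rw [cdfExt_sub_one F hm1] at hA
        have : F (Nat.find hex) ≤ F (m - 1) := hm (by omega)
        linarith [Nat.find_spec hex]
      · exact h2.symm

lemma toReal_ofReal' (x : ℝ) : (ENNReal.ofReal x).toReal = max x 0 := by
  rcases le_or_gt 0 x with h | h
  · rw [ENNReal.toReal_ofReal h, max_eq_left h]
  · rw [ENNReal.ofReal_eq_zero.mpr h.le, max_eq_right h.le]; simp

end ExtremeAux

open ExtremeAux

/-- The extreme measure `p^e` is a probability mass function on `ℤ≥0^J` whose `j`-th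
marginal has CDF `F_j` for every `j`. -/
theorem extremePMF_isPMF_with_marginals
    {J : ℕ} (hJ : 0 < J) (F : Fin J → ℕ → ℝ) (hF : ∀ j, IsCDF (F j))
    (e : Fin J → Bool) (he : e ⟨0, hJ⟩ = false) :
    (∀ i, 0 ≤ extremePMF hJ F e i) ∧
    (∑' i : Fin J → ℕ, extremePMF hJ F e i = 1) ∧
    (∀ j : Fin J, ∀ k : ℕ,
      ∑' i : Fin J → ℕ, (if i j = k then extremePMF hJ F e i else 0)
        = F j k - cdfExt (F j) ((k : ℤ) - 1)) := by
  classical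
  have hm : ∀ j, Monotone (F j) := fun j => (hF j).1
  have h0 : ∀ j, 0 ≤ F j 0 := fun j => (hF j).2.1
  have hlim : ∀ j, Tendsto (F j) atTop (nhds 1) := fun j => (hF j).2.2
  have hne : (Finset.univ : Finset (Fin J)).Nonempty :=
    Finset.univ_nonempty_iff.mpr ⟨⟨0, hJ⟩⟩
  set S : (Fin J → ℕ) → Set ℝ :=
    fun i => ⋂ j, Set.Ico (Bfun (F j) (e j) (i j)) (Afun (F j) (e j) (i j)) with hSdef
  set T : (Fin J → ℕ) → Set ℝ := fun i => S i ∩ Set.Ioo 0 1 with hTdef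
  have hBA : ∀ j k, Bfun (F j) (e j) k ≤ Afun (F j) (e j) k :=
    fun j k => Bfun_le_Afun (hm j) (h0 j) (e j) k
  have hB0 : ∀ j k, 0 ≤ Bfun (F j) (e j) k :=
    fun j k => Bfun_nonneg (hm j) (h0 j) (hlim j) (e j) k
  have hA1 : ∀ j k, Afun (F j) (e j) k ≤ 1 :=
    fun j k => Afun_le_one (hm j) (h0 j) (hlim j) (e j) k
  have hEU : ∀ j : Fin J, ∀ u ∈ Set.Ioo (0 : ℝ) 1,
      ∃! k : ℕ, u ∈ Set.Ico (Bfun (F j) (e j) k) (Afun (F j) (e j) k) :=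
    fun j u hu => existsUnique_mem (hm j) (h0 j) (hlim j) (e j) hu
  have hS_Ico : ∀ i, S i = Set.Ico
      (Finset.univ.sup' hne fun j => Bfun (F j) (e j) (i j))
      (Finset.univ.inf' hne fun j => Afun (F j) (e j) (i j)) := by
    intro i
    ext u
    simp only [hSdef, Set.mem_iInter, Set.mem_Ico, Finset.sup'_le_iff, Finset.lt_inf'_iff,
      Finset.mem_univ, true_implies]
    exact forall_and
  have hp : ∀ i, extremePMF hJ F e i = (MeasureTheory.volume (S i)).toReal := by
    intro i
    rw [hS_Ico i, Real.volume_Ico, toReal_ofReal']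
    rfl
  have hSsub : ∀ i j, S i ⊆ Set.Ico (Bfun (F j) (e j) (i j)) (Afun (F j) (e j) (i j)) :=
    fun i j => Set.iInter_subset _ j
  have hS01 : ∀ i, S i ⊆ Set.Ico (0 : ℝ) 1 := fun i =>
    (hSsub i ⟨0, hJ⟩).trans (Set.Ico_subset_Ico (hB0 _ _) (hA1 _ _))
  have hmeasS : ∀ i, MeasurableSet (S i) :=
    fun i => MeasurableSet.iInter fun j => measurableSet_Ico
  have hmeasT : ∀ i, MeasurableSet (T i) := fun i => (hmeasS i).inter measurableSet_Ioo
  have hvolT : ∀ i, MeasureTheory.volume (T i) = MeasureTheory.volume (S i) := by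
    intro i
    refine le_antisymm (MeasureTheory.measure_mono Set.inter_subset_left) ?_
    have hsub : S i ⊆ T i ∪ {0} := by
      intro u hu
      rcases eq_or_ne u 0 with h | h
      · exact Or.inr (by simp [h])
      · exact Or.inl ⟨hu, lt_of_le_of_ne (hS01 i hu).1 (Ne.symm h), (hS01 i hu).2⟩
    calc MeasureTheory.volume (S i) ≤ MeasureTheory.volume (T i ∪ {0}) :=
          MeasureTheory.measure_mono hsub
      _ ≤ MeasureTheory.volume (T i) + MeasureTheory.volume ({0} : Set ℝ) :=
          MeasureTheory.measure_union_le _ _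
      _ = MeasureTheory.volume (T i) := by simp [Real.volume_singleton]
  have hdisj : Pairwise (Function.onFun Disjoint T) := by
    intro i i' hni
    rw [Function.onFun, Set.disjoint_left]
    intro u hu hu'
    exact hni (funext fun j =>
      (hEU j u hu.2).unique (hSsub i j hu.1) (hSsub i' j hu'.1))
  have hcover : ⋃ i, T i = Set.Ioo (0 : ℝ) 1 := by
    apply Set.Subset.antisymm
    · exact Set.iUnion_subset fun i => Set.inter_subset_right
    · intro u hu
      choose c hc using fun j => (hEU j u hu).exists
      exact Set.mem_iUnion.mpr ⟨c, Set.mem_iInter.mpr hc, hu⟩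
  have hne_top : ∀ i, MeasureTheory.volume (S i) ≠ ⊤ := by
    intro i
    rw [hS_Ico i, Real.volume_Ico]
    exact ENNReal.ofReal_ne_top
  have hsum1 : ∑' i : Fin J → ℕ, MeasureTheory.volume (S i) = 1 := by
    calc ∑' i : Fin J → ℕ, MeasureTheory.volume (S i)
        = ∑' i : Fin J → ℕ, MeasureTheory.volume (T i) := by
          exact tsum_congr fun i => (hvolT i).symm
      _ = MeasureTheory.volume (⋃ i, T i) := (MeasureTheory.measure_iUnion hdisj hmeasT).symm
      _ = MeasureTheory.volume (Set.Ioo (0 : ℝ) 1) := by rw [hcover]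
      _ = 1 := by simp [Real.volume_Ioo]
  refine ⟨fun i => le_max_right _ _, ?_, ?_⟩
  · calc ∑' i : Fin J → ℕ, extremePMF hJ F e i
        = ∑' i : Fin J → ℕ, (MeasureTheory.volume (S i)).toReal := tsum_congr hp
      _ = (∑' i : Fin J → ℕ, MeasureTheory.volume (S i)).toReal :=
          (ENNReal.tsum_toReal_eq hne_top).symm
      _ = 1 := by rw [hsum1]; simp
  · intro j k
    set T' : (Fin J → ℕ) → Set ℝ := fun i => if i j = k then T i else ∅ with hT'def
    have hT'sub : ∀ i, T' i ⊆ T i := by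
      intro i
      simp only [hT'def]
      split_ifs
      · exact le_refl _
      · exact Set.empty_subset _
    have hg : ∀ i, (if i j = k then extremePMF hJ F e i else 0)
        = (MeasureTheory.volume (T' i)).toReal := by
      intro i
      by_cases h : i j = k
      · rw [if_pos h]
        simp only [hT'def, if_pos h]
        rw [hvolT i, hp i]
      · rw [if_neg h]
        simp [hT'def, h]
    have hdisj' : Pairwise (Function.onFun Disjoint T') := fun i i' hni =>
      (hdisj hni).mono (hT'sub i) (hT'sub i')
    have hmeasT' : ∀ i, MeasurableSet (T' i) := by
      intro i
      simp only [hT'def]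
      split_ifs
      · exact hmeasT i
      · exact MeasurableSet.empty
    have hcover' : ⋃ i, T' i =
        Set.Ioo (0 : ℝ) 1 ∩ Set.Ico (Bfun (F j) (e j) k) (Afun (F j) (e j) k) := by
      ext u
      constructor
      · intro h
        obtain ⟨i, hui⟩ := Set.mem_iUnion.mp h
        by_cases hij : i j = k
        · simp only [hT'def, if_pos hij] at hui
          exact ⟨hui.2, hij ▸ hSsub i j hui.1⟩
        · simp [hT'def, hij] at hui
      · rintro ⟨hu, huk⟩
        choose c hc using fun m => (hEU m u hu).exists
        refine Set.mem_iUnion.mpr ⟨Function.update c j k, ?_⟩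
        simp only [hT'def, Function.update_self, if_pos]
        refine ⟨Set.mem_iInter.mpr fun m => ?_, hu⟩
        rcases eq_or_ne m j with hmj | hmj
        · subst hmj
          simpa [Function.update_self] using huk
        · rw [Function.update_of_ne hmj]
          exact hc m
    have hvcov : MeasureTheory.volume
        (Set.Ioo (0 : ℝ) 1 ∩ Set.Ico (Bfun (F j) (e j) k) (Afun (F j) (e j) k))
        = ENNReal.ofReal (Afun (F j) (e j) k - Bfun (F j) (e j) k) := by
      refine le_antisymm ?_ ?_
      · calc MeasureTheory.volume (Set.Ioo (0 : ℝ) 1 ∩ _)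
            ≤ MeasureTheory.volume (Set.Ico (Bfun (F j) (e j) k) (Afun (F j) (e j) k)) :=
              MeasureTheory.measure_mono Set.inter_subset_right
          _ = _ := Real.volume_Ico
      · rw [← Real.volume_Ico]
        have hsub : Set.Ico (Bfun (F j) (e j) k) (Afun (F j) (e j) k)
            ⊆ (Set.Ioo (0 : ℝ) 1 ∩ Set.Ico (Bfun (F j) (e j) k) (Afun (F j) (e j) k)) ∪ {0} := by
          intro u hu
          rcases eq_or_ne u 0 with h | h
          · exact Or.inr (by simp [h])
          · refine Or.inl ⟨⟨?_, ?_⟩, hu⟩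
            · exact lt_of_le_of_ne ((hB0 j k).trans hu.1) (Ne.symm h)
            · exact lt_of_lt_of_le hu.2 (hA1 j k)
        calc MeasureTheory.volume (Set.Ico (Bfun (F j) (e j) k) (Afun (F j) (e j) k))
            ≤ MeasureTheory.volume ((Set.Ioo (0 : ℝ) 1 ∩ _) ∪ ({0} : Set ℝ)) :=
              MeasureTheory.measure_mono hsub
          _ ≤ MeasureTheory.volume (Set.Ioo (0 : ℝ) 1 ∩ _) +
              MeasureTheory.volume ({0} : Set ℝ) := MeasureTheory.measure_union_le _ _
          _ = _ := by simp [Real.volume_singleton]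
    have hne_top' : ∀ i, MeasureTheory.volume (T' i) ≠ ⊤ := fun i =>
      ne_top_of_le_ne_top (hne_top i)
        (le_trans (MeasureTheory.measure_mono (hT'sub i))
          (MeasureTheory.measure_mono Set.inter_subset_left))
    calc ∑' i : Fin J → ℕ, (if i j = k then extremePMF hJ F e i else 0)
        = ∑' i : Fin J → ℕ, (MeasureTheory.volume (T' i)).toReal := tsum_congr hg
      _ = (∑' i : Fin J → ℕ, MeasureTheory.volume (T' i)).toReal :=
          (ENNReal.tsum_toReal_eq hne_top').symm
      _ = (MeasureTheory.volume (⋃ i, T' i)).toReal := by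
          rw [MeasureTheory.measure_iUnion hdisj' hmeasT']
      _ = (ENNReal.ofReal (Afun (F j) (e j) k - Bfun (F j) (e j) k)).toReal := by
          rw [hcover', hvcov]
      _ = Afun (F j) (e j) k - Bfun (F j) (e j) k :=
          ENNReal.toReal_ofReal (sub_nonneg.mpr (hBA j k))
      _ = F j k - cdfExt (F j) ((k : ℤ) - 1) := Afun_sub_Bfun (F j) (e j) k
end

section
/- (Linear time structure of correlations under backward simulation) Let (N*¹, N*²) be a pair of ℤ≥0-valued random variables with finite positive variances and correlation ρ. Given (N*¹, N*²), let T_i^{(1)}, i ≤ N*¹, and T_i^{(2)}, i ≤ N*², be mutually independent Uniform[0,T] random variables, and set N_t^{(j)} = Σ_{i=1}^{N*^{(j)}} 1(T_i^{(j)} ≤ t). If N*^{(j)} ~ Poisson(λ_j T), then for 0 ≤ t ≤ T, corr(N_t^{(1)}, N_t^{(2)}) = ρ · t/T. -/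
open MeasureTheory ProbabilityTheory

noncomputable def covar {Ω : Type*} [MeasurableSpace Ω] (X Y : Ω → ℝ) (μ : Measure Ω) : ℝ :=
  (∫ ω, X ω * Y ω ∂μ) - (∫ ω, X ω ∂μ) * (∫ ω, Y ω ∂μ)

noncomputable def pearson {Ω : Type*} [MeasurableSpace Ω] (X Y : Ω → ℝ) (μ : Measure Ω) : ℝ :=
  covar X Y μ / Real.sqrt (variance X μ * variance Y μ)

/-- Index type for the family `((N*¹,N*²), T_i^{(1)}, T_i^{(2)})`. -/
def BS2Type : Option (Bool × ℕ) → Type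
  | none => ℕ × ℕ
  | some _ => ℝ

instance : ∀ o, MeasurableSpace (BS2Type o)
  | none => (inferInstance : MeasurableSpace (ℕ × ℕ))
  | some _ => (inferInstance : MeasurableSpace ℝ)

/-- The family `((N*¹,N*²), T_i^{(1)}, T_i^{(2)})` of random variables. -/
def BS2Fam {Ω : Type*} (Nstar : Ω → ℕ × ℕ) (U : Bool → ℕ → Ω → ℝ) : ∀ o, Ω → BS2Type o
  | none => Nstar
  | some bi => U bi.1 bi.2

/-- The two backward-simulation counting processes. -/
noncomputable def BS2Count {Ω : Type*} (Nstar : Ω → ℕ × ℕ) (U : Bool → ℕ → Ω → ℝ)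
    (b : Bool) (t : ℝ) (ω : Ω) : ℕ :=
  ∑ i ∈ Finset.range (if b then (Nstar ω).2 else (Nstar ω).1), if U b i ω ≤ t then 1 else 0

/-!
Write `N_t^{(b)} = ∑ᵢ 1{i < N*^{(b)}} 1{T_i^{(b)} ≤ t}` as a sum of indicators in `ℝ≥0∞`, so
that Tonelli turns moments into sums of probabilities. The arrival times are independent of `N*`
and of each other with `P(T ≤ t) = p := t/T`, hence
`E N_t^{(b)} = p E N*^{(b)}`, `E[N_t^{(1)} N_t^{(2)}] = p² E[N*¹ N*²]` and
`E[(N_t^{(b)})²] = p² E[(N*^{(b)})²] + (p - p²) E N*^{(b)}`, the diagonal terms `i = j` carrying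
`p` instead of `p²`. So the covariance scales by `p²`, while
`Var N_t^{(b)} = p² Var N*^{(b)} + p(1 - p) E N*^{(b)}`, which is `p Var N*^{(b)}` because a
Poisson variable has equal mean and variance (its factorial moments are `(λT)^k`). The correlation
therefore scales by `p² / √(p · p) = p`.
-/

open scoped ENNReal NNReal Nat
open Real

lemma hasSum_descFactorial_mul_pow_div_factorial (k : ℕ) (r : ℝ) :
    HasSum (fun n : ℕ => (n.descFactorial k : ℝ) * (r ^ n / n !)) (r ^ k * exp r) := by
  refine (hasSum_nat_add_iff' k).mp ?_
  have hlow : ∑ i ∈ Finset.range k, (i.descFactorial k : ℝ) * (r ^ i / i !) = 0 :=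
    Finset.sum_eq_zero fun i hi => by
      simp [Nat.descFactorial_eq_zero_iff_lt.mpr (Finset.mem_range.mp hi)]
  have hshift : ∀ n, ((n + k).descFactorial k : ℝ) * (r ^ (n + k) / (n + k)!)
      = r ^ k * (r ^ n / n !) := by
    intro n
    have hfact := Nat.factorial_mul_descFactorial (Nat.le_add_left k n)
    rw [Nat.add_sub_cancel] at hfact
    have hpos : ((n + k).descFactorial k : ℝ) ≠ 0 := by
      exact_mod_cast (Nat.descFactorial_pos.mpr (Nat.le_add_left k n)).ne'
    rw [← hfact, pow_add]
    push_cast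
    field_simp
  rw [hlow, sub_zero, exp_eq_exp_ℝ]
  exact ((NormedSpace.expSeries_div_hasSum_exp r).mul_left (r ^ k)).congr_fun hshift

lemma hasSum_poissonMeasure_descFactorial (r : ℝ≥0) (k : ℕ) :
    HasSum (fun n : ℕ => exp (-r) * r ^ n / n ! * (n.descFactorial k : ℝ)) (r ^ k) := by
  have h := (hasSum_descFactorial_mul_pow_div_factorial k r).mul_left (exp (-r))
  rw [mul_left_comm, ← exp_add, neg_add_cancel, exp_zero, mul_one] at h
  exact h.congr_fun fun n => by ring

lemma integrable_descFactorial_poissonMeasure (r : ℝ≥0) (k : ℕ) :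
    Integrable (fun n : ℕ => (n.descFactorial k : ℝ)) (poissonMeasure r) :=
  integrable_poissonMeasure_iff.mpr <| by
    simpa using (hasSum_poissonMeasure_descFactorial r k).summable

lemma integral_descFactorial_poissonMeasure (r : ℝ≥0) (k : ℕ) :
    ∫ n, (n.descFactorial k : ℝ) ∂poissonMeasure r = r ^ k := by
  rw [integral_poissonMeasure, ← (hasSum_poissonMeasure_descFactorial r k).tsum_eq]
  rfl

lemma natCast_sq_eq_descFactorial_two_add_descFactorial_one (n : ℕ) :
    (n : ℝ) ^ 2 = (n.descFactorial 2 : ℝ) + (n.descFactorial 1 : ℝ) := by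
  rcases n with _ | n
  · simp
  · simp [Nat.descFactorial_succ]
    ring

lemma integral_natCast_poissonMeasure (r : ℝ≥0) : ∫ n, (n : ℝ) ∂poissonMeasure r = r := by
  simpa using integral_descFactorial_poissonMeasure r 1

lemma memLp_natCast_poissonMeasure (r : ℝ≥0) :
    MemLp (fun n : ℕ => (n : ℝ)) 2 (poissonMeasure r) := by
  refine (memLp_two_iff_integrable_sq Measurable.of_discrete.aestronglyMeasurable).mpr ?_
  simp_rw [natCast_sq_eq_descFactorial_two_add_descFactorial_one]
  exact (integrable_descFactorial_poissonMeasure r 2).add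
    (integrable_descFactorial_poissonMeasure r 1)

lemma variance_natCast_poissonMeasure (r : ℝ≥0) :
    variance (fun n : ℕ => (n : ℝ)) (poissonMeasure r) = r := by
  rw [variance_eq_sub (memLp_natCast_poissonMeasure r)]
  simp only [Pi.pow_apply, natCast_sq_eq_descFactorial_two_add_descFactorial_one]
  rw [integral_add (integrable_descFactorial_poissonMeasure r 2)
    (integrable_descFactorial_poissonMeasure r 1), integral_descFactorial_poissonMeasure,
    integral_descFactorial_poissonMeasure, integral_natCast_poissonMeasure]
  ring

section PoissonLaw

variable {Ω : Type*} [MeasurableSpace Ω] {μ : Measure Ω} {ν : Ω → ℕ} {r : ℝ≥0}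

lemma ProbabilityTheory.HasLaw.memLp_natCast_of_poissonMeasure
    (hν : HasLaw ν (poissonMeasure r) μ) : MemLp (fun ω => (ν ω : ℝ)) 2 μ := by
  have h := memLp_natCast_poissonMeasure r
  rw [← hν.map_eq, memLp_map_measure_iff Measurable.of_discrete.aestronglyMeasurable
    hν.aemeasurable] at h
  exact h

lemma ProbabilityTheory.HasLaw.integral_natCast_of_poissonMeasure
    (hν : HasLaw ν (poissonMeasure r) μ) : ∫ ω, (ν ω : ℝ) ∂μ = r :=
  (hν.integral_comp Measurable.of_discrete.aestronglyMeasurable).trans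
    (integral_natCast_poissonMeasure r)

lemma ProbabilityTheory.HasLaw.variance_natCast_of_poissonMeasure
    (hν : HasLaw ν (poissonMeasure r) μ) : variance (fun ω => (ν ω : ℝ)) μ = r := by
  rw [← variance_natCast_poissonMeasure r, ← hν.map_eq,
    variance_map Measurable.of_discrete.aemeasurable hν.aemeasurable]
  rfl

end PoissonLaw

lemma measure_preimage_Iic_of_isUniform_Icc {Ω : Type*} [MeasurableSpace Ω] {μ : Measure Ω}
    {X : Ω → ℝ} {T t : ℝ} (hT : 0 < T) (htT : t ≤ T) (hX : pdf.IsUniform X (Set.Icc 0 T) μ) :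
    μ (X ⁻¹' Set.Iic t) = ENNReal.ofReal (t / T) := by
  have hvol : volume (Set.Icc (0 : ℝ) T) = ENNReal.ofReal T := by
    rw [Real.volume_Icc, sub_zero]
  rw [hX.measure_preimage (by simp [hvol, hT]) (by simp [hvol]) measurableSet_Iic,
    hvol, ← Set.Ici_inter_Iic, Set.inter_assoc, Set.Iic_inter_Iic, inf_eq_right.mpr htT,
    Set.Ici_inter_Iic, Real.volume_Icc, sub_zero, ENNReal.ofReal_div_of_pos hT]

lemma pearson_eq_mul_of_covar_eq_of_variance_eq {Ω : Type*} [MeasurableSpace Ω] {μ : Measure Ω}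
    {X Y A B : Ω → ℝ} {q : ℝ} (hq : 0 ≤ q) (hcov : covar X Y μ = q ^ 2 * covar A B μ)
    (hX : variance X μ = q * variance A μ) (hY : variance Y μ = q * variance B μ) :
    pearson X Y μ = q * pearson A B μ := by
  rw [pearson, pearson, hcov, hX, hY,
    show q * variance A μ * (q * variance B μ) = q ^ 2 * (variance A μ * variance B μ) by ring,
    Real.sqrt_mul (sq_nonneg q), Real.sqrt_sq hq]
  rcases hq.eq_or_lt with rfl | hq
  · simp
  · field_simp

lemma tsum_indicator_one_mul_tsum_indicator_one {Ω : Type*} (E F : ℕ → Set Ω) (ω : Ω) :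
    (∑' i, (E i).indicator (1 : Ω → ℝ≥0∞) ω) * (∑' j, (F j).indicator 1 ω)
      = ∑' ij : ℕ × ℕ, (E ij.1 ∩ F ij.2).indicator 1 ω := by
  rw [← ENNReal.tsum_mul_right,
    ENNReal.tsum_prod (f := fun i j => (E i ∩ F j).indicator (1 : Ω → ℝ≥0∞) ω)]
  refine tsum_congr fun i => ?_
  rw [← ENNReal.tsum_mul_left]
  refine tsum_congr fun j => ?_
  rw [Set.inter_indicator_one]
  rfl

lemma natCast_sum_range_ite_eq_tsum (n : ℕ) (p : ℕ → Prop) [DecidablePred p] :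
    ((∑ i ∈ Finset.range n, if p i then 1 else 0 : ℕ) : ℝ≥0∞)
      = ∑' i, if i < n ∧ p i then 1 else 0 := by
  rw [tsum_eq_sum (s := Finset.range n) fun i hi => by simp [Finset.mem_range.not.mp hi]]
  push_cast
  exact Finset.sum_congr rfl fun i hi => by simp [Finset.mem_range.mp hi]

section Counting

variable {Ω : Type*} [MeasurableSpace Ω] {μ : Measure Ω}

lemma lintegral_tsum_indicator_one {ι : Type*} [Countable ι] {E : ι → Set Ω}
    (hE : ∀ i, MeasurableSet (E i)) :
    ∫⁻ ω, ∑' i, (E i).indicator 1 ω ∂μ = ∑' i, μ (E i) := by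
  rw [lintegral_tsum fun i => (measurable_one.indicator (hE i)).aemeasurable]
  simp_rw [lintegral_indicator_one (hE _)]

lemma lintegral_tsum_indicator_one_mul {E F : ℕ → Set Ω} (hE : ∀ i, MeasurableSet (E i))
    (hF : ∀ j, MeasurableSet (F j)) :
    ∫⁻ ω, (∑' i, (E i).indicator 1 ω) * (∑' j, (F j).indicator 1 ω) ∂μ
      = ∑' ij : ℕ × ℕ, μ (E ij.1 ∩ F ij.2) := by
  simp_rw [tsum_indicator_one_mul_tsum_indicator_one]
  exact lintegral_tsum_indicator_one fun ij => (hE ij.1).inter (hF ij.2)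

lemma integral_natCast_eq_toReal_lintegral {f : Ω → ℕ} (hf : Measurable f) :
    ∫ ω, (f ω : ℝ) ∂μ = (∫⁻ ω, (f ω : ℝ≥0∞) ∂μ).toReal := by
  simpa using integral_toReal (μ := μ) (Measurable.of_discrete.comp hf).aemeasurable
    (ae_of_all _ fun ω => ENNReal.natCast_lt_top (f ω))

lemma integral_natCast_mul_eq_toReal_lintegral {f g : Ω → ℕ} (hf : Measurable f)
    (hg : Measurable g) :
    ∫ ω, (f ω : ℝ) * g ω ∂μ = (∫⁻ ω, (f ω : ℝ≥0∞) * g ω ∂μ).toReal := by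
  simpa using integral_natCast_eq_toReal_lintegral (μ := μ) (hf.mul hg)

end Counting

section Representation

variable {Ω : Type*} {Nstar : Ω → ℕ × ℕ} {U : Bool → ℕ → Ω → ℝ}

def BS2Total (Nstar : Ω → ℕ × ℕ) (b : Bool) (ω : Ω) : ℕ :=
  if b then (Nstar ω).2 else (Nstar ω).1

lemma BS2Count_le_BS2Total (t : ℝ) (b : Bool) (ω : Ω) :
    BS2Count Nstar U b t ω ≤ BS2Total Nstar b ω :=
  calc BS2Count Nstar U b t ω ≤ ∑ _i ∈ Finset.range (BS2Total Nstar b ω), 1 :=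
        Finset.sum_le_sum fun _ _ => by split_ifs <;> simp
    _ = BS2Total Nstar b ω := by simp

lemma natCast_BS2Total_eq_tsum (b : Bool) (ω : Ω) :
    (BS2Total Nstar b ω : ℝ≥0∞) = ∑' i, {ω | i < BS2Total Nstar b ω}.indicator 1 ω := by
  have h := natCast_sum_range_ite_eq_tsum (BS2Total Nstar b ω) fun _ => True
  simp only [Finset.sum_boole, Finset.filter_true, Finset.card_range, Nat.cast_id,
    and_true] at h
  rw [h]
  exact tsum_congr fun i => by simp [Set.indicator_apply]

lemma natCast_BS2Count_eq_tsum (t : ℝ) (b : Bool) (ω : Ω) :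
    (BS2Count Nstar U b t ω : ℝ≥0∞)
      = ∑' i, ({ω | i < BS2Total Nstar b ω} ∩ U b i ⁻¹' Set.Iic t).indicator 1 ω := by
  classical
  rw [BS2Count, natCast_sum_range_ite_eq_tsum]
  exact tsum_congr fun i => by simp [Set.indicator_apply, BS2Total]

variable [MeasurableSpace Ω]

lemma measurableSet_lt_BS2Total (hNmeas : Measurable Nstar) (b : Bool) (i : ℕ) :
    MeasurableSet {ω | i < BS2Total Nstar b ω} :=
  hNmeas (MeasurableSet.of_discrete (s := {q : ℕ × ℕ | i < if b then q.2 else q.1}))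

lemma measurable_BS2Total (hNmeas : Measurable Nstar) (b : Bool) :
    Measurable (BS2Total Nstar b) := by
  cases b
  · exact hNmeas.fst
  · exact hNmeas.snd

lemma measurable_BS2Count (hNmeas : Measurable Nstar) (hUmeas : ∀ b i, Measurable (U b i))
    (b : Bool) (t : ℝ) : Measurable (BS2Count Nstar U b t) := by
  have h : Measurable fun nω : ℕ × Ω =>
      ∑ i ∈ Finset.range nω.1, if U b i nω.2 ≤ t then 1 else 0 :=
    measurable_from_prod_countable_right fun n =>
      Finset.measurable_sum (Finset.range n) fun i _ =>
        Measurable.ite (p := fun ω => U b i ω ≤ t) (hUmeas b i measurableSet_Iic)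
          measurable_const measurable_const
  exact h.comp ((measurable_BS2Total hNmeas b).prodMk measurable_id)

end Representation

section Independence

variable {Ω : Type*} [MeasureSpace Ω] {Nstar : Ω → ℕ × ℕ} {U : Bool → ℕ → Ω → ℝ}

lemma BS2Fam.measure_preimage_inter_preimage_eq_mul (hindep : iIndepFun (BS2Fam Nstar U) ℙ)
    (s : Set (ℕ × ℕ)) (b : Bool) (i : ℕ) {A : Set ℝ} (hA : MeasurableSet A) :
    ℙ (Nstar ⁻¹' s ∩ U b i ⁻¹' A) = ℙ (Nstar ⁻¹' s) * ℙ (U b i ⁻¹' A) := by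
  classical
  have h := hindep.measure_inter_preimage_eq_mul (S := {none, some (b, i)})
    (sets := fun o => match o with
      | none => s
      | some _ => A)
    (fun o _ => by cases o with
      | none => exact MeasurableSet.of_discrete (α := ℕ × ℕ)
      | some _ => exact hA)
  simp [BS2Fam] at h
  exact h

lemma BS2Fam.measure_preimage_inter_preimage_inter_preimage_eq_mul
    (hindep : iIndepFun (BS2Fam Nstar U) ℙ) (s : Set (ℕ × ℕ)) {b b' : Bool} {i j : ℕ}
    (hne : (b, i) ≠ (b', j)) {A : Set ℝ} (hA : MeasurableSet A) :
    ℙ (Nstar ⁻¹' s ∩ (U b i ⁻¹' A ∩ U b' j ⁻¹' A))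
      = ℙ (Nstar ⁻¹' s) * (ℙ (U b i ⁻¹' A) * ℙ (U b' j ⁻¹' A)) := by
  classical
  have h := hindep.measure_inter_preimage_eq_mul (S := {none, some (b, i), some (b', j)})
    (sets := fun o => match o with
      | none => s
      | some _ => A)
    (fun o _ => by cases o with
      | none => exact MeasurableSet.of_discrete (α := ℕ × ℕ)
      | some _ => exact hA)
  simp [BS2Fam, hne] at h
  exact h

variable {t : ℝ} {p : ℝ≥0∞}

lemma measure_lt_BS2Total_inter_Iic (hindep : iIndepFun (BS2Fam Nstar U) ℙ)
    (hp : ∀ b i, ℙ (U b i ⁻¹' Set.Iic t) = p) (b : Bool) (i : ℕ) :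
    ℙ ({ω | i < BS2Total Nstar b ω} ∩ U b i ⁻¹' Set.Iic t)
      = ℙ {ω | i < BS2Total Nstar b ω} * p := by
  have h := BS2Fam.measure_preimage_inter_preimage_eq_mul hindep
    {q | i < if b then q.2 else q.1} b i (measurableSet_Iic (a := t))
  rwa [hp] at h

lemma measure_lt_BS2Total_inter_Iic_inter (hindep : iIndepFun (BS2Fam Nstar U) ℙ)
    (hp : ∀ b i, ℙ (U b i ⁻¹' Set.Iic t) = p) {b b' : Bool} {i j : ℕ}
    (hne : (b, i) ≠ (b', j)) :
    ℙ (({ω | i < BS2Total Nstar b ω} ∩ U b i ⁻¹' Set.Iic t)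
        ∩ ({ω | j < BS2Total Nstar b' ω} ∩ U b' j ⁻¹' Set.Iic t))
      = ℙ ({ω | i < BS2Total Nstar b ω} ∩ {ω | j < BS2Total Nstar b' ω}) * p ^ 2 := by
  have h := BS2Fam.measure_preimage_inter_preimage_inter_preimage_eq_mul hindep
    ({q | i < if b then q.2 else q.1} ∩ {q | j < if b' then q.2 else q.1}) hne
    (measurableSet_Iic (a := t))
  rw [hp, hp, ← sq] at h
  rwa [Set.inter_inter_inter_comm]

end Independence

section Moments

variable {Ω : Type*} [MeasureSpace Ω] {Nstar : Ω → ℕ × ℕ} {U : Bool → ℕ → Ω → ℝ}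
  {t : ℝ} {p : ℝ≥0∞}

lemma lintegral_BS2Total (hNmeas : Measurable Nstar) (b : Bool) :
    ∫⁻ ω, (BS2Total Nstar b ω : ℝ≥0∞) = ∑' i, ℙ {ω | i < BS2Total Nstar b ω} := by
  simp_rw [natCast_BS2Total_eq_tsum]
  exact lintegral_tsum_indicator_one (measurableSet_lt_BS2Total hNmeas b)

lemma lintegral_BS2Total_mul (hNmeas : Measurable Nstar) (b b' : Bool) :
    ∫⁻ ω, (BS2Total Nstar b ω : ℝ≥0∞) * BS2Total Nstar b' ω
      = ∑' ij : ℕ × ℕ,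
          ℙ ({ω | ij.1 < BS2Total Nstar b ω} ∩ {ω | ij.2 < BS2Total Nstar b' ω}) := by
  simp_rw [natCast_BS2Total_eq_tsum]
  exact lintegral_tsum_indicator_one_mul (measurableSet_lt_BS2Total hNmeas b)
    (measurableSet_lt_BS2Total hNmeas b')

lemma lintegral_BS2Count_mul_eq_tsum (hNmeas : Measurable Nstar)
    (hUmeas : ∀ b i, Measurable (U b i)) (b b' : Bool) :
    ∫⁻ ω, (BS2Count Nstar U b t ω : ℝ≥0∞) * BS2Count Nstar U b' t ω
      = ∑' ij : ℕ × ℕ, ℙ (({ω | ij.1 < BS2Total Nstar b ω} ∩ U b ij.1 ⁻¹' Set.Iic t)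
          ∩ ({ω | ij.2 < BS2Total Nstar b' ω} ∩ U b' ij.2 ⁻¹' Set.Iic t)) := by
  simp_rw [natCast_BS2Count_eq_tsum]
  exact lintegral_tsum_indicator_one_mul
    (fun i => (measurableSet_lt_BS2Total hNmeas b i).inter (hUmeas b i measurableSet_Iic))
    (fun j => (measurableSet_lt_BS2Total hNmeas b' j).inter (hUmeas b' j measurableSet_Iic))

variable (hNmeas : Measurable Nstar) (hUmeas : ∀ b i, Measurable (U b i))
  (hindep : iIndepFun (BS2Fam Nstar U) ℙ) (hp : ∀ b i, ℙ (U b i ⁻¹' Set.Iic t) = p)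
include hNmeas hUmeas hindep hp

lemma lintegral_BS2Count (b : Bool) :
    ∫⁻ ω, (BS2Count Nstar U b t ω : ℝ≥0∞) = p * ∫⁻ ω, (BS2Total Nstar b ω : ℝ≥0∞) := by
  simp_rw [natCast_BS2Count_eq_tsum]
  rw [lintegral_tsum_indicator_one
      fun i => (measurableSet_lt_BS2Total hNmeas b i).inter (hUmeas b i measurableSet_Iic),
    lintegral_BS2Total hNmeas, ← ENNReal.tsum_mul_left]
  exact tsum_congr fun i => by rw [measure_lt_BS2Total_inter_Iic hindep hp, mul_comm]

lemma lintegral_BS2Count_mul_of_ne {b b' : Bool} (hb : b ≠ b') :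
    ∫⁻ ω, (BS2Count Nstar U b t ω : ℝ≥0∞) * BS2Count Nstar U b' t ω
      = p ^ 2 * ∫⁻ ω, (BS2Total Nstar b ω : ℝ≥0∞) * BS2Total Nstar b' ω := by
  rw [lintegral_BS2Count_mul_eq_tsum hNmeas hUmeas, lintegral_BS2Total_mul hNmeas,
    ← ENNReal.tsum_mul_left]
  exact tsum_congr fun ij => by
    rw [measure_lt_BS2Total_inter_Iic_inter hindep hp (by simp [hb]), mul_comm]

lemma lintegral_BS2Count_sq [IsProbabilityMeasure (ℙ : Measure Ω)] (b : Bool) :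
    ∫⁻ ω, (BS2Count Nstar U b t ω : ℝ≥0∞) * BS2Count Nstar U b t ω
      = p ^ 2 * (∫⁻ ω, (BS2Total Nstar b ω : ℝ≥0∞) * BS2Total Nstar b ω)
        + (p - p ^ 2) * ∫⁻ ω, (BS2Total Nstar b ω : ℝ≥0∞) := by
  have hp2 : p ^ 2 ≤ p := pow_le_of_le_one zero_le (hp false 0 ▸ prob_le_one) two_ne_zero
  have hsplit : ∀ ij : ℕ × ℕ,
      ℙ (({ω | ij.1 < BS2Total Nstar b ω} ∩ U b ij.1 ⁻¹' Set.Iic t)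
          ∩ ({ω | ij.2 < BS2Total Nstar b ω} ∩ U b ij.2 ⁻¹' Set.Iic t))
        = p ^ 2 * ℙ ({ω | ij.1 < BS2Total Nstar b ω} ∩ {ω | ij.2 < BS2Total Nstar b ω})
          + if ij.2 = ij.1 then (p - p ^ 2) * ℙ {ω | ij.1 < BS2Total Nstar b ω} else 0 := by
    rintro ⟨i, j⟩
    by_cases hij : j = i
    · subst hij
      rw [Set.inter_self, Set.inter_self, if_pos rfl, measure_lt_BS2Total_inter_Iic hindep hp,
        ← add_mul, add_tsub_cancel_of_le hp2, mul_comm]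
    · rw [if_neg hij, add_zero,
        measure_lt_BS2Total_inter_Iic_inter hindep hp (by simp [Ne.symm hij]), mul_comm]
  rw [lintegral_BS2Count_mul_eq_tsum hNmeas hUmeas, tsum_congr hsplit, ENNReal.tsum_add,
    lintegral_BS2Total_mul hNmeas, lintegral_BS2Total hNmeas, ENNReal.tsum_prod
      (f := fun i j => if j = i then (p - p ^ 2) * ℙ {ω | i < BS2Total Nstar b ω} else 0)]
  simp_rw [tsum_ite_eq, ENNReal.tsum_mul_left]

lemma covar_BS2Count :
    covar (fun ω => (BS2Count Nstar U false t ω : ℝ)) (fun ω => (BS2Count Nstar U true t ω : ℝ)) ℙ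
      = p.toReal ^ 2 * covar (fun ω => (BS2Total Nstar false ω : ℝ))
          (fun ω => (BS2Total Nstar true ω : ℝ)) ℙ := by
  have hX := measurable_BS2Count hNmeas hUmeas
  have hν := measurable_BS2Total hNmeas
  simp only [covar]
  rw [integral_natCast_mul_eq_toReal_lintegral (hX false t) (hX true t),
    integral_natCast_mul_eq_toReal_lintegral (hν false) (hν true),
    integral_natCast_eq_toReal_lintegral (hX false t),
    integral_natCast_eq_toReal_lintegral (hX true t),
    integral_natCast_eq_toReal_lintegral (hν false), integral_natCast_eq_toReal_lintegral (hν true),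
    lintegral_BS2Count_mul_of_ne hNmeas hUmeas hindep hp Bool.false_ne_true,
    lintegral_BS2Count hNmeas hUmeas hindep hp, lintegral_BS2Count hNmeas hUmeas hindep hp]
  simp only [ENNReal.toReal_mul, ENNReal.toReal_pow]
  ring

lemma variance_BS2Count [IsProbabilityMeasure (ℙ : Measure Ω)] (b : Bool)
    (hν : MemLp (fun ω => (BS2Total Nstar b ω : ℝ)) 2) :
    variance (fun ω => (BS2Count Nstar U b t ω : ℝ)) ℙ
      = p.toReal ^ 2 * variance (fun ω => (BS2Total Nstar b ω : ℝ)) ℙ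
        + (p.toReal - p.toReal ^ 2) * ∫ ω, (BS2Total Nstar b ω : ℝ) := by
  have hXm := measurable_BS2Count hNmeas hUmeas b t
  have hνm := measurable_BS2Total hNmeas b
  have hX : MemLp (fun ω => (BS2Count Nstar U b t ω : ℝ)) 2 :=
    hν.of_le (Measurable.of_discrete.comp hXm).aestronglyMeasurable
      (ae_of_all _ fun ω => by simpa using BS2Count_le_BS2Total (U := U) t b ω)
  have hsq : ∫⁻ ω, (BS2Total Nstar b ω : ℝ≥0∞) * BS2Total Nstar b ω < ⊤ := by
    refine (lintegral_congr fun ω => ?_).trans_lt hν.integrable_sq.lintegral_lt_top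
    rw [← sq, ← ENNReal.ofReal_natCast, ← ENNReal.ofReal_pow (Nat.cast_nonneg _)]
  have hmean : ∫⁻ ω, (BS2Total Nstar b ω : ℝ≥0∞) < ⊤ :=
    (lintegral_mono fun ω => by
      rw [← Nat.cast_mul]; exact Nat.mono_cast (Nat.le_mul_self _)).trans_lt hsq
  have hp1 : p ≤ 1 := hp false 0 ▸ prob_le_one
  have hptop : p ≠ ⊤ := ne_top_of_le_ne_top ENNReal.one_ne_top hp1
  rw [variance_eq_sub hX, variance_eq_sub hν]
  simp only [Pi.pow_apply, sq]
  rw [integral_natCast_mul_eq_toReal_lintegral hXm hXm,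
    integral_natCast_mul_eq_toReal_lintegral hνm hνm,
    integral_natCast_eq_toReal_lintegral hXm, integral_natCast_eq_toReal_lintegral hνm,
    lintegral_BS2Count_sq hNmeas hUmeas hindep hp, lintegral_BS2Count hNmeas hUmeas hindep hp,
    ENNReal.toReal_add (ENNReal.mul_ne_top (ENNReal.pow_ne_top hptop) hsq.ne)
      (ENNReal.mul_ne_top (ENNReal.sub_ne_top hptop) hmean.ne), ENNReal.toReal_mul,
    ENNReal.toReal_mul, ENNReal.toReal_mul,
    ENNReal.toReal_sub_of_le (pow_le_of_le_one zero_le hp1 two_ne_zero) hptop,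
    ENNReal.toReal_pow]
  ring

lemma variance_BS2Count_of_hasLaw_poissonMeasure [IsProbabilityMeasure (ℙ : Measure Ω)]
    {b : Bool} {r : ℝ≥0} (hlaw : HasLaw (BS2Total Nstar b) (poissonMeasure r) ℙ) :
    variance (fun ω => (BS2Count Nstar U b t ω : ℝ)) ℙ
      = p.toReal * variance (fun ω => (BS2Total Nstar b ω : ℝ)) ℙ := by
  rw [variance_BS2Count hNmeas hUmeas hindep hp b hlaw.memLp_natCast_of_poissonMeasure,
    hlaw.variance_natCast_of_poissonMeasure, hlaw.integral_natCast_of_poissonMeasure]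
  ring

end Moments

/-- Linear time structure of correlations under backward simulation: if
`N*^{(j)} ~ Poisson(λ_j T)` with correlation `ρ`, and the arrival times are mutually
independent `Uniform[0,T]` independent of `(N*¹,N*²)`, then
`corr(N_t^{(1)}, N_t^{(2)}) = ρ·t/T` for `0 ≤ t ≤ T`. -/
theorem backward_simulation_linear_correlation
    {Ω : Type*} [MeasureSpace Ω] [IsProbabilityMeasure (ℙ : Measure Ω)]
    (lam₁ lam₂ T : ℝ) (hlam₁ : 0 < lam₁) (hlam₂ : 0 < lam₂) (hT : 0 < T)
    (Nstar : Ω → ℕ × ℕ) (U : Bool → ℕ → Ω → ℝ)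
    (hNmeas : Measurable Nstar) (hUmeas : ∀ b i, Measurable (U b i))
    (hindep : iIndepFun (BS2Fam Nstar U) ℙ)
    (hN₁ : Measure.map (fun ω => (Nstar ω).1) ℙ
      = poissonMeasure ⟨lam₁ * T, mul_nonneg hlam₁.le hT.le⟩)
    (hN₂ : Measure.map (fun ω => (Nstar ω).2) ℙ
      = poissonMeasure ⟨lam₂ * T, mul_nonneg hlam₂.le hT.le⟩)
    (hUunif : ∀ b i, pdf.IsUniform (U b i) (Set.Icc 0 T) ℙ)
    (ρ : ℝ)
    (hρ : pearson (fun ω => ((Nstar ω).1 : ℝ)) (fun ω => ((Nstar ω).2 : ℝ)) ℙ = ρ)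
    (t : ℝ) (ht0 : 0 ≤ t) (htT : t ≤ T) :
    pearson (fun ω => (BS2Count Nstar U false t ω : ℝ))
            (fun ω => (BS2Count Nstar U true t ω : ℝ)) ℙ = ρ * t / T := by
  have hp : ∀ b i, ℙ (U b i ⁻¹' Set.Iic t) = ENNReal.ofReal (t / T) := fun b i =>
    measure_preimage_Iic_of_isUniform_Icc hT htT (hUunif b i)
  have hlaw₁ : HasLaw (BS2Total Nstar false) (poissonMeasure _) ℙ :=
    ⟨(measurable_BS2Total hNmeas false).aemeasurable, hN₁⟩
  have hlaw₂ : HasLaw (BS2Total Nstar true) (poissonMeasure _) ℙ :=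
    ⟨(measurable_BS2Total hNmeas true).aemeasurable, hN₂⟩
  rw [← hρ, mul_div_assoc, mul_comm, ← ENNReal.toReal_ofReal (div_nonneg ht0 hT.le)]
  exact pearson_eq_mul_of_covar_eq_of_variance_eq ENNReal.toReal_nonneg
    (covar_BS2Count hNmeas hUmeas hindep hp)
    (variance_BS2Count_of_hasLaw_poissonMeasure hNmeas hUmeas hindep hp hlaw₁)
    (variance_BS2Count_of_hasLaw_poissonMeasure hNmeas hUmeas hindep hp hlaw₂)
end
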